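/- For 0 < κ ≤ 1 and a unit vector ĉ = (c₁,c₂,c₃) ∈ ℝ³, define the average figure of merit ⟨F⟩(κ,ĉ) := ∫_{S²} (1 − log₂(1 + κ·√(c₁²n₁² + c₂²n₂² + c₃²n₃²))) dμ(n). Then for every 0 < κ ≤ 1 and every unit vector ĉ, ⟨F⟩(κ, (1,1,1)/√3) ≤ ⟨F⟩(κ, ĉ) ≤ ⟨F⟩(κ, (0,0,1)); that is, at fixed κ ≤ 1 the minimum over directions is attained at the isotropic direction and the maximum at the direction with a single nonzero component. -/

import Mathlib

open MeasureTheory Matrix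

/-- Euclidean norm of a vector in ℝ³. -/
noncomputable def enorm3 (v : Fin 3 → ℝ) : ℝ := Real.sqrt (v 0 ^ 2 + v 1 ^ 2 + v 2 ^ 2)

/-- Euclidean inner product on ℝ³. -/
def dot3 (v w : Fin 3 → ℝ) : ℝ := v 0 * w 0 + v 1 * w 1 + v 2 * w 2

/-- `μ` is the uniform (rotation-invariant) probability measure on the unit sphere
`S² = {v ∈ ℝ³ : |v| = 1}`: it is a probability measure, it gives full measure to the
sphere, and it is invariant under every orthogonal transformation of ℝ³. -/
def IsUniformSphereMeasure (μ : Measure (Fin 3 → ℝ)) : Prop :=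
  IsProbabilityMeasure μ ∧
  μ {v | v 0 ^ 2 + v 1 ^ 2 + v 2 ^ 2 ≠ 1} = 0 ∧
  ∀ O : Matrix (Fin 3) (Fin 3) ℝ, O * Oᵀ = 1 → μ.map (Matrix.mulVec O) = μ


/-- The average RSP figure of merit `⟨F⟩(κ,ĉ)` for the MMMS with correlation matrix
`E = κ·diag(c₁,c₂,c₃)`, averaged over the sphere of target states. -/
noncomputable def avgF (μ : Measure (Fin 3 → ℝ)) (κ : ℝ) (c : Fin 3 → ℝ) : ℝ :=
  ∫ n, (1 - Real.logb 2
    (1 + κ * Real.sqrt (c 0 ^ 2 * n 0 ^ 2 + c 1 ^ 2 * n 1 ^ 2 + c 2 ^ 2 * n 2 ^ 2))) ∂μ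
/-! Write `F(n) = 1 - φ(Q_c(n))` with `φ(t) = log₂(1 + κ√t)`, concave on `[0, ∞)`, and
`Q_c(n) = Σ cᵢ² nᵢ²`. Permuting coordinates preserves `μ`, so `∫ nᵢ² dμ = 1/3` and hence
`∫ Q_c dμ = 1/3` for every unit `c`; Jensen gives `∫ φ(Q_c) dμ ≤ φ(1/3)`, the value for the
isotropic direction, where `Q_c ≡ 1/3` on the sphere. Conversely, concavity with weights `cᵢ²`
gives `φ(Q_c(n)) ≥ Σ cᵢ² φ(nᵢ²)`, and by the same symmetry the right-hand side integrates to
`∫ φ(n₃²) dμ`, the value for `c = (0,0,1)`. -/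

open Set

noncomputable def meritDeficit (κ t : ℝ) : ℝ := Real.logb 2 (1 + κ * Real.sqrt t)

/-- `|nE|² = κ² · diagQuadForm c n`, so `F(n) = 1 - meritDeficit κ (diagQuadForm c n)`. -/
def diagQuadForm (c n : Fin 3 → ℝ) : ℝ := c 0 ^ 2 * n 0 ^ 2 + c 1 ^ 2 * n 1 ^ 2 + c 2 ^ 2 * n 2 ^ 2

lemma diagQuadForm_eq_sum (c n : Fin 3 → ℝ) : diagQuadForm c n = ∑ i, c i ^ 2 * n i ^ 2 := by
  simp [diagQuadForm, Fin.sum_univ_three]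

lemma diagQuadForm_nonneg (c n : Fin 3 → ℝ) : 0 ≤ diagQuadForm c n := by
  unfold diagQuadForm
  positivity

lemma continuous_diagQuadForm (c : Fin 3 → ℝ) : Continuous (diagQuadForm c) := by
  unfold diagQuadForm
  fun_prop

lemma diagQuadForm_isotropic {n : Fin 3 → ℝ} (hn : n 0 ^ 2 + n 1 ^ 2 + n 2 ^ 2 = 1) :
    diagQuadForm ![1 / Real.sqrt 3, 1 / Real.sqrt 3, 1 / Real.sqrt 3] n = 1 / 3 := by
  have h3 : (1 / Real.sqrt 3) ^ 2 = 1 / 3 := by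
    rw [div_pow, one_pow, Real.sq_sqrt (by norm_num : (0 : ℝ) ≤ 3)]
  simp only [diagQuadForm, Matrix.cons_val, h3]
  linear_combination hn / 3

lemma diagQuadForm_axis (n : Fin 3 → ℝ) : diagQuadForm ![0, 0, 1] n = n 2 ^ 2 := by
  simp [diagQuadForm]

lemma one_add_mul_sqrt_pos {κ : ℝ} (hκ : 0 ≤ κ) (t : ℝ) : 0 < 1 + κ * Real.sqrt t := by
  positivity

lemma continuous_one_add_mul_sqrt (κ : ℝ) : Continuous fun t => 1 + κ * Real.sqrt t :=
  continuous_const.add (continuous_const.mul Real.continuous_sqrt)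

lemma continuous_meritDeficit {κ : ℝ} (hκ : 0 ≤ κ) : Continuous (meritDeficit κ) :=
  ((continuous_one_add_mul_sqrt κ).log fun t => (one_add_mul_sqrt_pos hκ t).ne').div_const _

lemma concaveOn_meritDeficit {κ : ℝ} (hκ : 0 ≤ κ) : ConcaveOn ℝ (Ici 0) (meritDeficit κ) := by
  set u : ℝ → ℝ := fun t => 1 + κ * Real.sqrt t
  have hu : ConcaveOn ℝ (Ici 0) u :=
    (concaveOn_const 1 (convex_Ici 0)).add (Real.strictConcaveOn_sqrt.concaveOn.smul hκ)
  have himage : u '' Ici 0 ⊆ Ioi 0 := by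
    rintro _ ⟨t, -, rfl⟩
    exact one_add_mul_sqrt_pos hκ t
  have himage_convex : Convex ℝ (u '' Ici 0) :=
    Real.convex_iff_isPreconnected.2 <|
      isPreconnected_Ici.image u (continuous_one_add_mul_sqrt κ).continuousOn
  have hlog : ConcaveOn ℝ (Ici 0) (Real.log ∘ u) :=
    (strictConcaveOn_log_Ioi.concaveOn.subset himage himage_convex).comp hu
      (Real.strictMonoOn_log.monotoneOn.mono himage)
  have hdef : meritDeficit κ = (Real.log 2)⁻¹ • (Real.log ∘ u) := by
    funext t
    simp [meritDeficit, u, Real.logb, div_eq_inv_mul]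
  rw [hdef]
  exact hlog.smul (inv_nonneg.2 (Real.log_nonneg one_le_two))

namespace IsUniformSphereMeasure

variable {μ : Measure (Fin 3 → ℝ)} (hμ : IsUniformSphereMeasure μ)
include hμ

lemma ae_sphere : ∀ᵐ n ∂μ, n 0 ^ 2 + n 1 ^ 2 + n 2 ^ 2 = 1 :=
  ae_iff.2 hμ.2.1

lemma ae_mem_closedBall : ∀ᵐ n ∂μ, n ∈ Metric.closedBall 0 1 := by
  filter_upwards [hμ.ae_sphere] with n hn
  rw [mem_closedBall_zero_iff, pi_norm_le_iff_of_nonneg zero_le_one]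
  intro i
  have hi : n i ^ 2 ≤ ∑ j, n j ^ 2 :=
    Finset.single_le_sum (fun j _ => sq_nonneg (n j)) (Finset.mem_univ i)
  rw [Fin.sum_univ_three, hn] at hi
  rwa [Real.norm_eq_abs, ← sq_le_one_iff_abs_le_one]

lemma integrable_of_continuous {E : Type*} [NormedAddCommGroup E] {g : (Fin 3 → ℝ) → E}
    (hg : Continuous g) : Integrable g μ := by
  have := hμ.1
  rw [← Measure.restrict_eq_self_of_ae_mem hμ.ae_mem_closedBall]
  exact hg.continuousOn.integrableOn_compact (isCompact_closedBall 0 1)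

lemma integral_comp_mulVec {E : Type*} [NormedAddCommGroup E] [NormedSpace ℝ E]
    {O : Matrix (Fin 3) (Fin 3) ℝ} (hO : O * Oᵀ = 1) {g : (Fin 3 → ℝ) → E}
    (hg : AEStronglyMeasurable g μ) : ∫ n, g (O *ᵥ n) ∂μ = ∫ n, g n ∂μ := by
  have hmeas : Measurable (O *ᵥ ·) :=
    (Matrix.mulVecLin O).continuous_of_finiteDimensional.measurable
  rw [← integral_map hmeas.aemeasurable (by rwa [hμ.2.2 O hO]), hμ.2.2 O hO]

lemma integral_comp_apply {E : Type*} [NormedAddCommGroup E] [NormedSpace ℝ E]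
    {h : ℝ → E} (hh : StronglyMeasurable h) (i j : Fin 3) :
    ∫ n, h (n i) ∂μ = ∫ n, h (n j) ∂μ := by
  have hO : (Equiv.swap i j).permMatrix ℝ * ((Equiv.swap i j).permMatrix ℝ)ᵀ = 1 := by
    rw [Matrix.transpose_permMatrix, ← Matrix.permMatrix_mul, inv_mul_cancel,
      Matrix.permMatrix_one]
  have := hμ.integral_comp_mulVec hO
    (hh.comp_measurable (measurable_pi_apply i)).aestronglyMeasurable
  simpa [Matrix.permMatrix_mulVec] using this.symm

lemma integral_sq_apply (i : Fin 3) : ∫ n, n i ^ 2 ∂μ = 1 / 3 := by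
  have := hμ.1
  have hint (j : Fin 3) : Integrable (fun n : Fin 3 → ℝ => n j ^ 2) μ :=
    hμ.integrable_of_continuous (by fun_prop)
  have hsum : ∑ j, ∫ n, n j ^ 2 ∂μ = 1 := by
    rw [← integral_finsetSum _ fun j _ => hint j,
      integral_congr_ae (hμ.ae_sphere.mono fun n hn => by simpa [Fin.sum_univ_three] using hn)]
    simp
  have hsym (j : Fin 3) := hμ.integral_comp_apply (h := fun t : ℝ => t ^ 2)
    (continuous_pow 2).stronglyMeasurable j i
  rw [Fin.sum_univ_three, hsym 0, hsym 1, hsym 2] at hsum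
  linarith

lemma integral_diagQuadForm {c : Fin 3 → ℝ} (hc : c 0 ^ 2 + c 1 ^ 2 + c 2 ^ 2 = 1) :
    ∫ n, diagQuadForm c n ∂μ = 1 / 3 := by
  have hint (i : Fin 3) : Integrable (fun n : Fin 3 → ℝ => c i ^ 2 * n i ^ 2) μ :=
    hμ.integrable_of_continuous (by fun_prop)
  simp only [diagQuadForm_eq_sum]
  rw [integral_finsetSum _ fun i _ => hint i]
  simp only [integral_const_mul, hμ.integral_sq_apply, Fin.sum_univ_three]
  linear_combination hc / 3

lemma avgF_eq {κ : ℝ} (hκ : 0 ≤ κ) (c : Fin 3 → ℝ) :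
    avgF μ κ c = 1 - ∫ n, meritDeficit κ (diagQuadForm c n) ∂μ := by
  have := hμ.1
  have hint : Integrable (fun n => meritDeficit κ (diagQuadForm c n)) μ :=
    hμ.integrable_of_continuous ((continuous_meritDeficit hκ).comp (continuous_diagQuadForm c))
  change ∫ n, (1 - meritDeficit κ (diagQuadForm c n)) ∂μ = _
  rw [integral_sub (integrable_const 1) hint]
  simp

section Concave

variable {φ : ℝ → ℝ} (hφ : ConcaveOn ℝ (Ici 0) φ) (hφc : Continuous φ)
  {c : Fin 3 → ℝ} (hc : c 0 ^ 2 + c 1 ^ 2 + c 2 ^ 2 = 1)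
include hφ hφc hc

lemma integral_comp_diagQuadForm_le : ∫ n, φ (diagQuadForm c n) ∂μ ≤ φ (1 / 3) := by
  have := hμ.1
  rw [← hμ.integral_diagQuadForm hc]
  exact hφ.le_map_integral hφc.continuousOn isClosed_Ici
    (ae_of_all _ fun n => diagQuadForm_nonneg c n)
    (hμ.integrable_of_continuous (continuous_diagQuadForm c))
    (hμ.integrable_of_continuous (hφc.comp (continuous_diagQuadForm c)))

lemma integral_comp_sq_le_integral_comp_diagQuadForm :
    ∫ n, φ (n 2 ^ 2) ∂μ ≤ ∫ n, φ (diagQuadForm c n) ∂μ := by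
  have hint (i : Fin 3) : Integrable (fun n : Fin 3 → ℝ => c i ^ 2 * φ (n i ^ 2)) μ :=
    hμ.integrable_of_continuous (by fun_prop)
  have hsym (i : Fin 3) := hμ.integral_comp_apply (h := fun t => φ (t ^ 2))
    (by fun_prop : Continuous fun t : ℝ => φ (t ^ 2)).stronglyMeasurable i 2
  have hjensen (n : Fin 3 → ℝ) : ∑ i, c i ^ 2 * φ (n i ^ 2) ≤ φ (diagQuadForm c n) := by
    simpa [diagQuadForm_eq_sum] using
      hφ.le_map_sum (t := Finset.univ) (w := fun i => c i ^ 2) (p := fun i => n i ^ 2)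
        (fun i _ => sq_nonneg _) (by simpa [Fin.sum_univ_three] using hc)
        (fun i _ => sq_nonneg (n i))
  calc ∫ n, φ (n 2 ^ 2) ∂μ = ∑ i, c i ^ 2 * ∫ n, φ (n i ^ 2) ∂μ := by
        simp only [Fin.sum_univ_three, hsym]
        linear_combination (-∫ n, φ (n 2 ^ 2) ∂μ) * hc
    _ = ∫ n, ∑ i, c i ^ 2 * φ (n i ^ 2) ∂μ := by
        rw [integral_finsetSum _ fun i _ => hint i]
        simp only [integral_const_mul]
    _ ≤ ∫ n, φ (diagQuadForm c n) ∂μ :=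
        integral_mono (integrable_finsetSum _ fun i _ => hint i)
          (hμ.integrable_of_continuous (hφc.comp (continuous_diagQuadForm c))) hjensen

end Concave

end IsUniformSphereMeasure

theorem stmt14_general (μ : Measure (Fin 3 → ℝ)) (hμ : IsUniformSphereMeasure μ)
    (κ : ℝ) (hκ0 : 0 < κ)
    (c : Fin 3 → ℝ) (hc : c 0 ^ 2 + c 1 ^ 2 + c 2 ^ 2 = 1) :
    avgF μ κ ![1 / Real.sqrt 3, 1 / Real.sqrt 3, 1 / Real.sqrt 3] ≤ avgF μ κ c ∧
    avgF μ κ c ≤ avgF μ κ ![0, 0, 1] := by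
  have := hμ.1
  have hφ := concaveOn_meritDeficit hκ0.le
  have hφc := continuous_meritDeficit hκ0.le
  have hiso : ∫ n, meritDeficit κ (diagQuadForm ![1 / Real.sqrt 3, 1 / Real.sqrt 3,
      1 / Real.sqrt 3] n) ∂μ = meritDeficit κ (1 / 3) := by
    rw [integral_congr_ae (hμ.ae_sphere.mono fun n hn => by rw [diagQuadForm_isotropic hn])]
    simp
  simp only [hμ.avgF_eq hκ0.le, diagQuadForm_axis, hiso]
  constructor
  · linarith [hμ.integral_comp_diagQuadForm_le hφ hφc hc]
  · linarith [hμ.integral_comp_sq_le_integral_comp_diagQuadForm hφ hφc hc]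

/-- For `0 < κ ≤ 1` and any unit direction `ĉ`, the average figure of merit is minimal
for the isotropic direction `(1,1,1)/√3` and maximal for the direction `(0,0,1)`. -/
theorem stmt14 (μ : Measure (Fin 3 → ℝ)) (hμ : IsUniformSphereMeasure μ)
    (κ : ℝ) (hκ0 : 0 < κ) (hκ1 : κ ≤ 1)
    (c : Fin 3 → ℝ) (hc : c 0 ^ 2 + c 1 ^ 2 + c 2 ^ 2 = 1) :
    avgF μ κ ![1 / Real.sqrt 3, 1 / Real.sqrt 3, 1 / Real.sqrt 3] ≤ avgF μ κ c ∧
    avgF μ κ c ≤ avgF μ κ ![0, 0, 1] :=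
  stmt14_general μ hμ κ hκ0 c hc
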